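/- Let m ≥ 2 be an integer with m ≡ 3 (mod 4), let f(x) = x^m on ℤ_2, and let t = ν_2(m + 1). For each integer l ≥ 0, each a ∈ {0, 1, …, 2^(t−1) − 1}, and each sign ε ∈ {1, −1}, let x₀ = ε + 2^(l+2) + 2^(l+4)·a (a 2-adic unit, with inverse x₀⁻¹ in ℤ_2) and set M_{l,a,ε} = (x₀ + 2^(t+l+3)ℤ_2) ∪ (x₀⁻¹ + 2^(t+l+2) + 2^(t+l+3)ℤ_2). Then the sets M_{l,a,ε} are pairwise disjoint clopen subsets of ℤ_2, each M_{l,a,ε} is a minimal component of f (f(M_{l,a,ε}) ⊆ M_{l,a,ε} and every forward orbit of f in M_{l,a,ε} is dense in M_{l,a,ε}), and the union of all the M_{l,a,ε} together with the fixed-point set {1, −1} equals the set of 2-adic units ℤ_2 \ 2ℤ_2. -/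

import Mathlib

/-!
An odd `z ≠ ±1` can be written `z = ε + 2^(l+2) u` with `ε = ±1` and `u` odd, so that
`z² = 1 + 2^(l+3) c` with `c` odd. Lifting the exponent through `m + 1 = 2^t q` (`q` odd) gives
`z^(m+1) ≡ 1 + 2^(t+l+2)`, i.e. `z^m ≡ z⁻¹ + 2^(t+l+2) (mod 2^(t+l+3))`. Since
`x ↦ x⁻¹ + 2^(t+l+2)` is an involution modulo `2^(t+l+3)`, the map `x ↦ x^m` interchanges the two
balls of `M_{l,a,ε}`, and on each of them `x ↦ x^(m²)` is an odometer:
`z^((m²)^(2^N)) = z + 2^(t+l+3+N)·(odd)`, which makes every orbit dense. Whether `z` lies in the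
first or the second ball of some `M_{l,a,ε}` is decided by `u mod 4`, and `a` is read off from
the binary digits `l + 4, …, t + l + 2` of `z - ε` (resp. of `z⁻¹ + 2^(t+l+2) - ε`).
-/

open scoped Ring

section BinomialTwoAdic

variable {R : Type*} [CommSemiring R]

theorem exists_one_add_pow_eq (y : R) (n : ℕ) : ∃ d, (1 + y) ^ n = 1 + n * y + y ^ 2 * d := by
  induction n with
  | zero => exact ⟨0, by simp⟩
  | succ n ih =>
    obtain ⟨d, hd⟩ := ih
    exact ⟨n + d + y * d, by rw [pow_succ, hd]; push_cast; ring⟩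

theorem exists_one_add_two_pow_mul_pow_two_pow {k : ℕ} (hk : 2 ≤ k) (c : R) (j : ℕ) :
    ∃ d, (1 + 2 ^ k * c) ^ 2 ^ j = 1 + 2 ^ (k + j) * (c + 2 * d) := by
  obtain ⟨k, rfl⟩ := Nat.exists_eq_add_of_le' hk
  induction j with
  | zero => exact ⟨0, by simp⟩
  | succ j ih =>
    obtain ⟨d, hd⟩ := ih
    exact ⟨d + 2 ^ (k + j) * (c + 2 * d) ^ 2, by rw [pow_succ 2 j, pow_mul, hd]; ring⟩

theorem exists_one_add_two_pow_mul_pow {k : ℕ} (hk : 2 ≤ k) (c : R) (v q : ℕ) :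
    ∃ d, (1 + 2 ^ k * c) ^ (2 ^ v * q) = 1 + 2 ^ (k + v) * (q * c + 2 * d) := by
  obtain ⟨k, rfl⟩ := Nat.exists_eq_add_of_le' hk
  obtain ⟨e, he⟩ := exists_one_add_pow_eq (2 ^ (k + 2) * c) q
  obtain ⟨d, hd⟩ := exists_one_add_two_pow_mul_pow_two_pow hk
    (q * c + 2 * (2 ^ (k + 1) * c ^ 2 * e)) v
  refine ⟨2 ^ (k + 1) * c ^ 2 * e + d, ?_⟩
  have hbase : 1 + q * (2 ^ (k + 2) * c) + (2 ^ (k + 2) * c) ^ 2 * e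
      = 1 + 2 ^ (k + 2) * (q * c + 2 * (2 ^ (k + 1) * c ^ 2 * e)) := by ring
  rw [pow_mul', he, hbase, hd]
  ring

variable {z c : R} {l : ℕ}

theorem exists_pow_add_one_eq_of_sq_eq (hz : z ^ 2 = 1 + 2 ^ (l + 3) * c) {m t q : ℕ}
    (ht : t ≠ 0) (hm : m + 1 = 2 ^ t * q) :
    ∃ d, z ^ (m + 1) = 1 + 2 ^ (t + l + 2) * (q * c + 2 * d) := by
  obtain ⟨T, rfl⟩ : ∃ T, t = T + 1 := ⟨t - 1, by omega⟩
  obtain ⟨d, hd⟩ := exists_one_add_two_pow_mul_pow (by omega : 2 ≤ l + 3) c T q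
  refine ⟨d, ?_⟩
  rw [hm, pow_succ', mul_assoc, pow_mul, hz, hd]
  ring

theorem exists_pow_eq_of_sq_eq (hz : z ^ 2 = 1 + 2 ^ (l + 3) * c) (v e : ℕ) :
    ∃ d, z ^ (1 + 2 ^ (v + 1) * e) = z + 2 ^ (v + l + 3) * (z * (e * c + 2 * d)) := by
  obtain ⟨d, hd⟩ := exists_one_add_two_pow_mul_pow (by omega : 2 ≤ l + 3) c v e
  refine ⟨d, ?_⟩
  rw [pow_add, pow_one, pow_succ', mul_assoc, pow_mul, hz, hd]
  ring

end BinomialTwoAdic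

theorem exists_eq_two_pow_padicValNat_mul_odd {n : ℕ} (hn : n ≠ 0) :
    ∃ q, n = 2 ^ padicValNat 2 n * q ∧ Odd q := by
  obtain ⟨q, hq⟩ := pow_padicValNat_dvd (p := 2) (n := n)
  refine ⟨q, hq, Nat.odd_iff.mpr ?_⟩
  by_contra hq_even
  obtain ⟨r, rfl⟩ : 2 ∣ q := by omega
  exact pow_succ_padicValNat_not_dvd (p := 2) hn ⟨r, by nth_rw 1 [hq]; ring⟩

theorem exists_odd_sq_pow_two_pow_eq_one_add {m t q : ℕ} (ht : 2 ≤ t) (hm : m + 1 = 2 ^ t * q) (hq : Odd q)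
    (N : ℕ) : ∃ e, Odd e ∧ (m ^ 2) ^ 2 ^ N = 1 + 2 ^ (t + 1 + N) * e := by
  obtain ⟨T, rfl⟩ := Nat.exists_eq_add_of_le' ht
  have hm' : m + 1 = 2 * (2 * (2 ^ T * q)) := by rw [hm]; ring
  obtain ⟨r, rfl⟩ : ∃ r, m = 2 * r + 1 := ⟨m / 2, by omega⟩
  have hr : Odd r := Nat.odd_iff.mpr (by omega)
  have hsq : (2 * r + 1) ^ 2 = 1 + 2 ^ (T + 2 + 1) * (q * r) := by
    have hr1 : r + 1 = 2 ^ (T + 1) * q := by rw [pow_succ, mul_right_comm]; omega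
    calc (2 * r + 1) ^ 2 = 1 + 2 * (r + 1) * (2 * r) := by ring
      _ = 1 + 2 ^ (T + 2 + 1) * (q * r) := by rw [hr1]; ring
  obtain ⟨d, hd⟩ := exists_one_add_two_pow_mul_pow (by omega : 2 ≤ T + 2 + 1) (q * r) N 1
  refine ⟨q * r + 2 * d, (hq.mul hr).add_even (even_two_mul d), ?_⟩
  rw [hsq, ← mul_one (2 ^ N), hd, Nat.cast_one, one_mul]

theorem dvd_inverse_sub_inverse {R : Type*} [CommRing R] {a x y : R} (hx : IsUnit x)
    (hy : IsUnit y) (h : a ∣ x - y) : a ∣ x⁻¹ʳ - y⁻¹ʳ := by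
  have hinv : x⁻¹ʳ - y⁻¹ʳ = x⁻¹ʳ * y⁻¹ʳ * (y - x) := by
    linear_combination y⁻¹ʳ * Ring.mul_inverse_cancel x hx - x⁻¹ʳ * Ring.mul_inverse_cancel y hy
  rw [hinv]
  exact dvd_mul_of_dvd_right (dvd_sub_comm.mp h) _

namespace PadicInt

section Prime

variable {p : ℕ} [hp : Fact p.Prime]

theorem pow_dvd_iff_norm_le (x : ℤ_[p]) (n : ℕ) :
    (p : ℤ_[p]) ^ n ∣ x ↔ ‖x‖ ≤ (p : ℝ) ^ (-n : ℤ) := by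
  rw [norm_le_pow_iff_mem_span_pow, Ideal.mem_span_singleton]

theorem isClopen_setOf_pow_dvd_sub (c : ℤ_[p]) (n : ℕ) :
    IsClopen {x | (p : ℤ_[p]) ^ n ∣ x - c} := by
  have hball : {x | (p : ℤ_[p]) ^ n ∣ x - c} = Metric.closedBall c ((p : ℝ) ^ (-n : ℤ)) := by
    ext x
    rw [Metric.mem_closedBall, dist_eq_norm, ← pow_dvd_iff_norm_le]
    rfl
  rw [hball]
  exact IsUltrametricDist.isClopen_closedBall c (zpow_ne_zero _ (by exact_mod_cast hp.out.ne_zero))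

theorem mem_closure_range_of_forall_pow_dvd {f : ℕ → ℤ_[p]} {y : ℤ_[p]}
    (h : ∀ n, ∃ k, (p : ℤ_[p]) ^ n ∣ y - f k) : y ∈ closure (Set.range f) := by
  rw [Metric.mem_closure_iff]
  intro δ hδ
  have hp1 : (1 : ℝ) < p := by exact_mod_cast hp.out.one_lt
  obtain ⟨n, hn⟩ := exists_pow_lt_of_lt_one hδ (inv_lt_one_of_one_lt₀ hp1)
  obtain ⟨k, hk⟩ := h n
  refine ⟨f k, ⟨k, rfl⟩, ?_⟩
  rw [dist_eq_norm]
  calc ‖y - f k‖ ≤ (p : ℝ) ^ (-n : ℤ) := (pow_dvd_iff_norm_le _ n).mp hk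
    _ = (p : ℝ)⁻¹ ^ n := by rw [zpow_neg, zpow_natCast, inv_pow]
    _ < δ := hn

theorem exists_lt_pow_dvd_sub_add {x c : ℤ_[p]} {j : ℕ} (h : (p : ℤ_[p]) ^ j ∣ x - c) (r : ℕ) :
    ∃ a < p ^ r, (p : ℤ_[p]) ^ (j + r) ∣ x - (c + p ^ j * a) := by
  obtain ⟨w, hw⟩ := h
  obtain ⟨s, hs⟩ := Ideal.mem_span_singleton.mp (appr_spec r w)
  exact ⟨w.appr r, appr_lt w r, s, by linear_combination hw + (p : ℤ_[p]) ^ j * hs⟩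

theorem eq_of_pow_dvd_sub_add {x c : ℤ_[p]} {j r a a' : ℕ} (ha : a < p ^ r) (ha' : a' < p ^ r)
    (h : (p : ℤ_[p]) ^ (j + r) ∣ x - (c + p ^ j * a))
    (h' : (p : ℤ_[p]) ^ (j + r) ∣ x - (c + p ^ j * a')) : a = a' := by
  have hdiff : (p : ℤ_[p]) ^ j * p ^ r ∣ p ^ j * (a - a') := by
    rw [← pow_add]
    convert dvd_sub h' h using 1
    ring
  have hr : (a : ℤ_[p]) - a' ∈ Ideal.span {(p : ℤ_[p]) ^ r} :=
    Ideal.mem_span_singleton.mpr ((mul_dvd_mul_iff_left (pow_ne_zero j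
      (by exact_mod_cast hp.out.ne_zero))).mp hdiff)
  have hcast := zmod_congr_of_sub_mem_span r (a : ℤ_[p]) a a' (by simp) hr
  rwa [ZMod.natCast_eq_natCast_iff', Nat.mod_eq_of_lt ha, Nat.mod_eq_of_lt ha'] at hcast

end Prime

theorem two_dvd_iff_toZMod_eq_zero (x : ℤ_[2]) : 2 ∣ x ↔ toZMod x = 0 := by
  rw [← RingHom.mem_ker, ker_toZMod, maximalIdeal_eq_span_p, Ideal.mem_span_singleton,
    Nat.cast_ofNat]

theorem odd_iff_not_two_dvd (x : ℤ_[2]) : Odd x ↔ ¬ 2 ∣ x := by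
  have hZMod : ∀ z : ZMod 2, ¬ z = 0 ↔ z - 1 = 0 := by decide
  rw [two_dvd_iff_toZMod_eq_zero, hZMod, ← map_one toZMod, ← map_sub,
    ← two_dvd_iff_toZMod_eq_zero]
  exact ⟨fun ⟨k, hk⟩ => ⟨k, by rw [hk]; ring⟩, fun ⟨k, hk⟩ => ⟨k, by linear_combination hk⟩⟩

theorem even_or_odd (x : ℤ_[2]) : Even x ∨ Odd x := by
  rw [odd_iff_not_two_dvd, even_iff_two_dvd]
  exact em _

theorem isUnit_iff_odd (x : ℤ_[2]) : IsUnit x ↔ Odd x := by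
  have hdvd : 2 ∣ x ↔ ‖x‖ < 1 := by simpa using (norm_lt_one_iff_dvd x).symm
  rw [odd_iff_not_two_dvd, isUnit_iff, hdvd]
  exact ⟨fun h => h.not_lt, fun h => le_antisymm (norm_le_one x) (not_lt.mp h)⟩

theorem odd_inverse {x : ℤ_[2]} (hx : Odd x) : Odd x⁻¹ʳ :=
  (isUnit_iff_odd _).mp ((isUnit_iff_odd x).mpr hx).ringInverse

theorem not_four_dvd_two : ¬ (4 : ℤ_[2]) ∣ 2 := by
  rintro ⟨k, hk⟩
  refine (odd_iff_not_two_dvd 1).mp odd_one ⟨k, mul_left_cancel₀ two_ne_zero ?_⟩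
  linear_combination hk

theorem sign_eq_of_four_dvd_sub {ε ε' : ℤ_[2]} (hε : ε = 1 ∨ ε = -1) (hε' : ε' = 1 ∨ ε' = -1)
    (h : 4 ∣ ε - ε') : ε = ε' := by
  rcases hε with rfl | rfl <;> rcases hε' with rfl | rfl
  · rfl
  · exact absurd (by convert h using 1; ring) not_four_dvd_two
  · exact absurd (by convert h.neg_right using 1; ring) not_four_dvd_two
  · rfl

theorem exists_sign_four_dvd_sub {x : ℤ_[2]} (hx : Odd x) :
    ∃ ε : ℤ_[2], (ε = 1 ∨ ε = -1) ∧ 4 ∣ x - ε := by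
  obtain ⟨k, rfl⟩ := hx
  rcases even_or_odd k with ⟨j, rfl⟩ | ⟨j, rfl⟩
  · exact ⟨1, Or.inl rfl, j, by ring⟩
  · exact ⟨-1, Or.inr rfl, j + 1, by ring⟩

theorem le_of_two_pow_mul_eq {n n' : ℕ} {u u' : ℤ_[2]} (hu' : Odd u')
    (h : 2 ^ n * u = 2 ^ n' * u') : n ≤ n' := by
  by_contra! hlt
  have hdvd : 2 ^ n' * 2 ∣ 2 ^ n' * u' := by
    rw [← pow_succ, ← h]
    exact dvd_mul_of_dvd_left (pow_dvd_pow 2 hlt) u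
  exact (odd_iff_not_two_dvd u').mp hu'
    ((mul_dvd_mul_iff_left (pow_ne_zero n' two_ne_zero)).mp hdvd)

section Layers

variable {ε s z : ℤ_[2]} {l : ℕ}

theorem exists_odd_eq_add_of_dvd_sub (hs : s = 1 ∨ s = -1)
    (h : 2 ^ (l + 4) ∣ z - (ε + s * 2 ^ (l + 2))) :
    ∃ u, Odd u ∧ 4 ∣ u - s ∧ z = ε + 2 ^ (l + 2) * u := by
  obtain ⟨w, hw⟩ := h
  have hs_odd : Odd s := by rcases hs with rfl | rfl <;> simp
  refine ⟨s + 4 * w, hs_odd.add_even ⟨2 * w, by ring⟩, ⟨w, by ring⟩, ?_⟩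
  linear_combination hw

theorem odd_of_eq_add {u : ℤ_[2]} (hε : ε = 1 ∨ ε = -1) (hz : z = ε + 2 ^ (l + 2) * u) :
    Odd z := by
  have hε_odd : Odd ε := by rcases hε with rfl | rfl <;> simp
  exact hz ▸ hε_odd.add_even ⟨2 ^ (l + 1) * u, by ring⟩

theorem exists_sq_eq_of_eq_add {u : ℤ_[2]} (hε : ε = 1 ∨ ε = -1) (hu : Odd u)
    (hz : z = ε + 2 ^ (l + 2) * u) : ∃ c, Odd c ∧ z ^ 2 = 1 + 2 ^ (l + 3) * c := by
  have hε_odd : Odd ε := by rcases hε with rfl | rfl <;> simp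
  have hε_sq : ε ^ 2 = 1 := by rcases hε with rfl | rfl <;> ring
  refine ⟨ε * u + 2 * (2 ^ l * u ^ 2), (hε_odd.mul hu).add_even (even_two_mul _), ?_⟩
  rw [hz]
  linear_combination hε_sq

theorem dvd_inverse_sub_of_dvd_sub (hε : ε = 1 ∨ ε = -1) (hs : s = 1 ∨ s = -1)
    (h : 2 ^ (l + 4) ∣ z - (ε + s * 2 ^ (l + 2))) :
    2 ^ (l + 4) ∣ z⁻¹ʳ - (ε + -s * 2 ^ (l + 2)) := by
  obtain ⟨u, -, -, hz⟩ := exists_odd_eq_add_of_dvd_sub hs h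
  have hzz := Ring.inverse_mul_cancel z ((isUnit_iff_odd z).mpr (odd_of_eq_add hε hz))
  have hε_sq : ε ^ 2 = 1 := by rcases hε with rfl | rfl <;> ring
  have hs_sq : s ^ 2 = 1 := by rcases hs with rfl | rfl <;> ring
  obtain ⟨w, hw⟩ := h
  refine ⟨z⁻¹ʳ * (2 ^ l - w * (ε - s * 2 ^ (l + 2))), ?_⟩
  linear_combination (ε - s * 2 ^ (l + 2)) * hzz - z⁻¹ʳ * (ε - s * 2 ^ (l + 2)) * hw
    - z⁻¹ʳ * hε_sq + z⁻¹ʳ * 2 ^ (2 * l + 4) * hs_sq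

theorem eq_of_dvd_sub_of_dvd_sub {ε' s' : ℤ_[2]} {l' : ℕ} (hε : ε = 1 ∨ ε = -1)
    (hs : s = 1 ∨ s = -1) (hε' : ε' = 1 ∨ ε' = -1) (hs' : s' = 1 ∨ s' = -1)
    (h : 2 ^ (l + 4) ∣ z - (ε + s * 2 ^ (l + 2)))
    (h' : 2 ^ (l' + 4) ∣ z - (ε' + s' * 2 ^ (l' + 2))) :
    ε = ε' ∧ l = l' ∧ s = s' := by
  obtain ⟨u, hu, hus, hz⟩ := exists_odd_eq_add_of_dvd_sub hs h
  obtain ⟨u', hu', hus', hz'⟩ := exists_odd_eq_add_of_dvd_sub hs' h'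
  have hεε : ε = ε' := sign_eq_of_four_dvd_sub hε hε' ⟨2 ^ l' * u' - 2 ^ l * u, by
    linear_combination hz' - hz⟩
  subst hεε
  have huu : 2 ^ (l + 2) * u = 2 ^ (l' + 2) * u' := by linear_combination hz' - hz
  have hll : l = l' := by
    have := le_of_two_pow_mul_eq hu' huu
    have := le_of_two_pow_mul_eq hu huu.symm
    omega
  subst hll
  have hu_eq : u = u' := mul_left_cancel₀ (pow_ne_zero _ two_ne_zero) huu
  subst hu_eq
  refine ⟨rfl, rfl, sign_eq_of_four_dvd_sub hs hs' ?_⟩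
  convert dvd_sub hus' hus using 1
  ring

theorem exists_dvd_sub_of_odd (hz : Odd z) (h₁ : z ≠ 1) (h₂ : z ≠ -1) :
    ∃ (ε s : ℤ_[2]) (l : ℕ), (ε = 1 ∨ ε = -1) ∧ (s = 1 ∨ s = -1) ∧
      2 ^ (l + 4) ∣ z - (ε + s * 2 ^ (l + 2)) := by
  obtain ⟨ε, hε, h4⟩ := exists_sign_four_dvd_sub hz
  have hne : z - ε ≠ 0 := sub_ne_zero.mpr (by rcases hε with rfl | rfl <;> assumption)
  have hv : 2 ≤ (z - ε).valuation := by
    rw [← mem_span_pow_iff_le_valuation _ hne, Ideal.mem_span_singleton]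
    convert h4 using 1
    norm_num
  obtain ⟨l, hl⟩ : ∃ l, (z - ε).valuation = l + 2 := ⟨_, (Nat.sub_add_cancel hv).symm⟩
  have hspec := unitCoeff_spec hne
  rw [Nat.cast_ofNat, hl] at hspec
  obtain ⟨s, hs, w, hw⟩ := exists_sign_four_dvd_sub ((isUnit_iff_odd _).mp (unitCoeff hne).isUnit)
  exact ⟨ε, s, l, hε, hs, w, by linear_combination hspec + 2 ^ (l + 2) * hw⟩

end Layers

/-- For `k = t + l + 2`, `x ↦ x ^ m` agrees with `invAdd k` modulo `2 ^ (k + 1)` on the two balls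
of `M_{l,a,ε}` and interchanges them. -/
noncomputable def invAdd (k : ℕ) (x : ℤ_[2]) : ℤ_[2] := x⁻¹ʳ + 2 ^ k

section InvAdd

variable {k : ℕ} {x y : ℤ_[2]}

theorem odd_invAdd (hk : k ≠ 0) (hx : Odd x) : Odd (invAdd k x) :=
  (odd_inverse hx).add_even (even_two.pow_of_ne_zero hk)

theorem dvd_invAdd_sub_invAdd {n : ℕ} (hx : Odd x) (hy : Odd y) (h : 2 ^ n ∣ x - y) :
    2 ^ n ∣ invAdd k x - invAdd k y := by
  rw [invAdd, invAdd, add_sub_add_right_eq_sub]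
  exact dvd_inverse_sub_inverse ((isUnit_iff_odd x).mpr hx) ((isUnit_iff_odd y).mpr hy) h

theorem dvd_invAdd_invAdd_sub (hk : k ≠ 0) (hx : Odd x) :
    2 ^ (k + 1) ∣ invAdd k (invAdd k x) - x := by
  have hxx := Ring.mul_inverse_cancel x ((isUnit_iff_odd x).mpr hx)
  have hyy := Ring.mul_inverse_cancel _ ((isUnit_iff_odd _).mpr (odd_invAdd hk hx))
  have hid : invAdd k (invAdd k x) - x = 2 ^ k * (invAdd k x)⁻¹ʳ * (x⁻¹ʳ - x + 2 ^ k) := by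
    unfold invAdd at hyy ⊢
    linear_combination (x - 2 ^ k) * hyy - (x⁻¹ʳ + 2 ^ k)⁻¹ʳ * hxx
  obtain ⟨e, he⟩ := even_iff_two_dvd.mp
    (((odd_inverse hx).sub_odd hx).add (even_two.pow_of_ne_zero hk))
  exact ⟨(invAdd k x)⁻¹ʳ * e, by rw [hid, he]; ring⟩

theorem dvd_invAdd_sub_of_dvd_sub_invAdd (hk : k ≠ 0) (hx : Odd x) (hy : Odd y)
    (h : 2 ^ (k + 1) ∣ x - invAdd k y) : 2 ^ (k + 1) ∣ invAdd k x - y := by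
  have h₁ := dvd_invAdd_sub_invAdd (k := k) hx (odd_invAdd hk hy) h
  have h₂ := dvd_invAdd_invAdd_sub hk hy
  convert dvd_add h₁ h₂ using 1
  ring

end InvAdd

/-- Odometer criterion: the `g`-orbit of `x` is dense in the ball `x + 2 ^ K ℤ_[2]`. -/
theorem exists_iterate_dvd_sub {g : ℤ_[2] → ℤ_[2]} {x : ℤ_[2]} {K : ℕ}
    (hg : ∀ z, 2 ^ K ∣ z - x → ∀ N, ∃ d, Odd d ∧ g^[2 ^ N] z = z + 2 ^ (K + N) * d)
    {y : ℤ_[2]} (hy : 2 ^ K ∣ y - x) (N : ℕ) : ∃ k, 2 ^ (K + N) ∣ y - g^[k] x := by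
  induction N with
  | zero => exact ⟨0, hy⟩
  | succ N ih =>
    obtain ⟨k, e, he⟩ := ih
    rcases even_or_odd e with ⟨e', rfl⟩ | he_odd
    · exact ⟨k, e', by rw [he]; ring⟩
    have hz : 2 ^ K ∣ g^[k] x - x := by
      convert dvd_sub hy (dvd_trans (pow_dvd_pow 2 (Nat.le_add_right K N)) ⟨e, he⟩) using 1
      ring
    obtain ⟨d, hd, hgd⟩ := hg _ hz N
    obtain ⟨f, hf⟩ := even_iff_two_dvd.mp (he_odd.sub_odd hd)
    refine ⟨2 ^ N + k, f, ?_⟩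
    rw [Function.iterate_add_apply, hgd]
    linear_combination he + 2 ^ (K + N) * hf

end PadicInt

namespace MonomialMap

open PadicInt

/-- `center l a ε` and `component t l a ε` are the point `x₀` and the set `M_{l,a,ε}` of the
statement. -/
noncomputable def center (l a : ℕ) (ε : ℤ_[2]) : ℤ_[2] := ε + 2 ^ (l + 2) + 2 ^ (l + 4) * a

def component (t l a : ℕ) (ε : ℤ_[2]) : Set ℤ_[2] :=
  {x | 2 ^ (t + l + 3) ∣ x - center l a ε} ∪
    {x | 2 ^ (t + l + 3) ∣ x - invAdd (t + l + 2) (center l a ε)}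

variable {m t q l : ℕ} {ε u z : ℤ_[2]}

theorem dvd_pow_sub_invAdd (ht : t ≠ 0) (hm : m + 1 = 2 ^ t * q) (hq : Odd q)
    (hε : ε = 1 ∨ ε = -1) (hu : Odd u) (hz : z = ε + 2 ^ (l + 2) * u) :
    2 ^ (t + l + 3) ∣ z ^ m - invAdd (t + l + 2) z := by
  obtain ⟨c, hc, hsq⟩ := exists_sq_eq_of_eq_add hε hu hz
  obtain ⟨d, hd⟩ := exists_pow_add_one_eq_of_sq_eq hsq ht hm
  have hz_odd := odd_of_eq_add hε hz
  have hzz := Ring.inverse_mul_cancel z ((isUnit_iff_odd z).mpr hz_odd)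
  obtain ⟨e, he⟩ := even_iff_two_dvd.mp
    (((hq.natCast.mul hc).add_even (even_two_mul d)).sub_odd hz_odd)
  refine ⟨z⁻¹ʳ * e, ?_⟩
  rw [invAdd]
  linear_combination (2 ^ (t + l + 2) - z ^ m) * hzz + z⁻¹ʳ * hd
    + 2 ^ (t + l + 2) * z⁻¹ʳ * he

theorem exists_odd_pow_sq_pow_two_pow_eq_add (ht : 2 ≤ t) (hm : m + 1 = 2 ^ t * q) (hq : Odd q)
    (hε : ε = 1 ∨ ε = -1) (hu : Odd u) (hz : z = ε + 2 ^ (l + 2) * u) (N : ℕ) :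
    ∃ d, Odd d ∧ z ^ (m ^ 2) ^ 2 ^ N = z + 2 ^ (t + l + 3 + N) * d := by
  obtain ⟨c, hc, hsq⟩ := exists_sq_eq_of_eq_add hε hu hz
  obtain ⟨e, he, hE⟩ := exists_odd_sq_pow_two_pow_eq_one_add ht hm hq N
  obtain ⟨d, hd⟩ := exists_pow_eq_of_sq_eq hsq (t + N) e
  refine ⟨z * (e * c + 2 * d),
    (odd_of_eq_add hε hz).mul ((he.natCast.mul hc).add_even (even_two_mul d)), ?_⟩
  rw [hE, show t + 1 + N = t + N + 1 by ring, hd]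
  ring

theorem mem_closure_orbit_of_dvd_sub (ht : 2 ≤ t) (hm : m + 1 = 2 ^ t * q) (hq : Odd q)
    (hε : ε = 1 ∨ ε = -1) (hu : Odd u) (hz : z = ε + 2 ^ (l + 2) * u) {y : ℤ_[2]}
    (hy : 2 ^ (t + l + 3) ∣ y - z) : y ∈ closure (Set.range fun k : ℕ => z ^ (m ^ 2) ^ k) := by
  have hball : ∀ x, 2 ^ (t + l + 3) ∣ x - z → ∀ N, ∃ d, Odd d ∧
      (fun x : ℤ_[2] => x ^ m ^ 2)^[2 ^ N] x = x + 2 ^ (t + l + 3 + N) * d := by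
    rintro x ⟨w, hw⟩ N
    rw [pow_iterate]
    have hu' : Odd (u + 2 ^ (t + 1) * w) := hu.add_even ⟨2 ^ t * w, by ring⟩
    refine exists_odd_pow_sq_pow_two_pow_eq_add ht hm hq hε hu' ?_ N
    linear_combination hw + hz
  refine mem_closure_range_of_forall_pow_dvd fun n => ?_
  obtain ⟨k, hk⟩ := exists_iterate_dvd_sub hball hy n
  rw [pow_iterate] at hk
  exact ⟨k, by simpa using dvd_trans (pow_dvd_pow 2 (Nat.le_add_left n _)) hk⟩

variable {a : ℕ} {x : ℤ_[2]}

theorem odd_center (hε : ε = 1 ∨ ε = -1) : Odd (center l a ε) :=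
  odd_of_eq_add hε (u := 1 + 4 * a) (by rw [center]; ring)

theorem dvd_sub_of_dvd_sub_center (ht : t ≠ 0) (h : 2 ^ (t + l + 3) ∣ z - center l a ε) :
    2 ^ (l + 4) ∣ z - (ε + 1 * 2 ^ (l + 2)) := by
  obtain ⟨T, rfl⟩ : ∃ T, t = T + 1 := ⟨t - 1, by omega⟩
  obtain ⟨w, hw⟩ := h
  exact ⟨a + 2 ^ T * w, by rw [center] at hw; linear_combination hw⟩

theorem dvd_sub_of_dvd_sub_invAdd_center (ht : 2 ≤ t) (hε : ε = 1 ∨ ε = -1)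
    (h : 2 ^ (t + l + 3) ∣ z - invAdd (t + l + 2) (center l a ε)) :
    2 ^ (l + 4) ∣ z - (ε + -1 * 2 ^ (l + 2)) := by
  have hc := dvd_inverse_sub_of_dvd_sub hε (Or.inl rfl)
    (⟨a, by rw [center]; ring⟩ : 2 ^ (l + 4) ∣ center l a ε - (ε + 1 * 2 ^ (l + 2)))
  have h₁ := dvd_trans (pow_dvd_pow 2 (by omega : l + 4 ≤ t + l + 3)) h
  have h₂ := (pow_dvd_pow 2 (by omega : l + 4 ≤ t + l + 2) : (2 : ℤ_[2]) ^ (l + 4) ∣ _)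
  convert dvd_add (dvd_add h₁ hc) h₂ using 1
  rw [invAdd]
  ring

theorem exists_eq_add_of_mem_component (ht : 2 ≤ t) (hε : ε = 1 ∨ ε = -1)
    (hz : z ∈ component t l a ε) : ∃ u, Odd u ∧ z = ε + 2 ^ (l + 2) * u := by
  rcases hz with h | h
  · obtain ⟨u, hu, -, hz⟩ :=
      exists_odd_eq_add_of_dvd_sub (Or.inl rfl) (dvd_sub_of_dvd_sub_center (by omega) h)
    exact ⟨u, hu, hz⟩
  · obtain ⟨u, hu, -, hz⟩ :=
      exists_odd_eq_add_of_dvd_sub (Or.inr rfl) (dvd_sub_of_dvd_sub_invAdd_center ht hε h)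
    exact ⟨u, hu, hz⟩

theorem odd_of_mem_component (ht : 2 ≤ t) (hε : ε = 1 ∨ ε = -1) (hz : z ∈ component t l a ε) :
    Odd z := by
  obtain ⟨u, -, hz⟩ := exists_eq_add_of_mem_component ht hε hz
  exact odd_of_eq_add hε hz

theorem isClopen_component : IsClopen (component t l a ε) := by
  have h := fun c n => isClopen_setOf_pow_dvd_sub (p := 2) c n
  simp only [Nat.cast_ofNat] at h
  exact (h _ _).union (h _ _)

theorem pow_dvd_sub_invAdd_center (ht : 2 ≤ t) (hm : m + 1 = 2 ^ t * q) (hq : Odd q)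
    (hε : ε = 1 ∨ ε = -1) (h : 2 ^ (t + l + 3) ∣ z - center l a ε) :
    2 ^ (t + l + 3) ∣ z ^ m - invAdd (t + l + 2) (center l a ε) := by
  obtain ⟨u, hu, -, hz⟩ :=
    exists_odd_eq_add_of_dvd_sub (Or.inl rfl) (dvd_sub_of_dvd_sub_center (by omega) h)
  have h₁ := dvd_pow_sub_invAdd (by omega) hm hq hε hu hz
  have h₂ := dvd_invAdd_sub_invAdd (k := t + l + 2) (odd_of_eq_add hε hz) (odd_center hε) h
  convert dvd_add h₁ h₂ using 1
  ring

theorem pow_dvd_sub_center (ht : 2 ≤ t) (hm : m + 1 = 2 ^ t * q) (hq : Odd q)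
    (hε : ε = 1 ∨ ε = -1) (h : 2 ^ (t + l + 3) ∣ z - invAdd (t + l + 2) (center l a ε)) :
    2 ^ (t + l + 3) ∣ z ^ m - center l a ε := by
  obtain ⟨u, hu, -, hz⟩ :=
    exists_odd_eq_add_of_dvd_sub (Or.inr rfl) (dvd_sub_of_dvd_sub_invAdd_center ht hε h)
  have h₁ := dvd_pow_sub_invAdd (by omega) hm hq hε hu hz
  have h₂ := dvd_invAdd_sub_of_dvd_sub_invAdd (by omega) (odd_of_eq_add hε hz) (odd_center hε) h
  convert dvd_add h₁ h₂ using 1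
  ring

theorem pow_mem_component (ht : 2 ≤ t) (hm : m + 1 = 2 ^ t * q) (hq : Odd q)
    (hε : ε = 1 ∨ ε = -1) (hz : z ∈ component t l a ε) : z ^ m ∈ component t l a ε :=
  hz.elim (fun h => Or.inr (pow_dvd_sub_invAdd_center ht hm hq hε h))
    (fun h => Or.inl (pow_dvd_sub_center ht hm hq hε h))

theorem pow_pow_mem_component (ht : 2 ≤ t) (hm : m + 1 = 2 ^ t * q) (hq : Odd q)
    (hε : ε = 1 ∨ ε = -1) (hx : x ∈ component t l a ε) (n : ℕ) :
    x ^ m ^ n ∈ component t l a ε := by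
  induction n with
  | zero => simpa using hx
  | succ n ih => simpa [pow_succ, pow_mul] using pow_mem_component ht hm hq hε ih

theorem component_subset_closure_orbit (ht : 2 ≤ t) (hm : m + 1 = 2 ^ t * q) (hq : Odd q)
    (hε : ε = 1 ∨ ε = -1) (hx : x ∈ component t l a ε) :
    component t l a ε ⊆ closure (Set.range fun n : ℕ => x ^ m ^ n) := by
  intro y hy
  obtain ⟨e, hye⟩ : ∃ e, 2 ^ (t + l + 3) ∣ y - x ^ m ^ e := by
    rcases hx with hx | hx <;> rcases hy with hy | hy
    · exact ⟨0, by simpa using dvd_sub hy hx⟩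
    · exact ⟨1, by simpa using dvd_sub hy (pow_dvd_sub_invAdd_center ht hm hq hε hx)⟩
    · exact ⟨1, by simpa using dvd_sub hy (pow_dvd_sub_center ht hm hq hε hx)⟩
    · exact ⟨0, by simpa using dvd_sub hy hx⟩
  obtain ⟨u, hu, hz⟩ :=
    exists_eq_add_of_mem_component ht hε (pow_pow_mem_component ht hm hq hε hx e)
  refine closure_mono ?_ (mem_closure_orbit_of_dvd_sub ht hm hq hε hu hz hye)
  rintro _ ⟨k, rfl⟩
  exact ⟨e + 2 * k, by dsimp only; rw [← pow_mul, ← pow_mul, ← pow_add]⟩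

theorem exists_dvd_sub_center (ht : t ≠ 0) (h : 2 ^ (l + 4) ∣ z - (ε + 1 * 2 ^ (l + 2))) :
    ∃ a < 2 ^ (t - 1), 2 ^ (t + l + 3) ∣ z - center l a ε := by
  obtain ⟨a, ha, hdvd⟩ :=
    exists_lt_pow_dvd_sub_add (p := 2) (c := ε + 2 ^ (l + 2)) (by simpa using h) (t - 1)
  refine ⟨a, ha, ?_⟩
  rwa [Nat.cast_ofNat, show l + 4 + (t - 1) = t + l + 3 by omega] at hdvd

theorem eq_of_dvd_sub_center {a' : ℕ} (ht : t ≠ 0) (ha : a < 2 ^ (t - 1))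
    (ha' : a' < 2 ^ (t - 1)) (h : 2 ^ (t + l + 3) ∣ z - center l a ε)
    (h' : 2 ^ (t + l + 3) ∣ z - center l a' ε) : a = a' := by
  have hexp : t + l + 3 = l + 4 + (t - 1) := by omega
  rw [hexp] at h h'
  exact eq_of_pow_dvd_sub_add (p := 2) (c := ε + 2 ^ (l + 2)) ha ha'
    (by simpa [center] using h) (by simpa [center] using h')

theorem disjoint_component (ht : 2 ≤ t) {l' a' : ℕ} {ε' : ℤ_[2]} (ha : a < 2 ^ (t - 1))
    (ha' : a' < 2 ^ (t - 1)) (hε : ε = 1 ∨ ε = -1) (hε' : ε' = 1 ∨ ε' = -1)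
    (hne : (l, a, ε) ≠ (l', a', ε')) : Disjoint (component t l a ε) (component t l' a' ε') := by
  rw [Set.disjoint_left]
  intro z hz hz'
  have h1 : (1 : ℤ_[2]) ≠ -1 := by norm_num
  rcases hz with h | h <;> rcases hz' with h' | h'
  · obtain ⟨rfl, rfl, -⟩ := eq_of_dvd_sub_of_dvd_sub hε (Or.inl rfl) hε' (Or.inl rfl)
      (dvd_sub_of_dvd_sub_center (by omega) h) (dvd_sub_of_dvd_sub_center (by omega) h')
    exact hne (by rw [eq_of_dvd_sub_center (by omega) ha ha' h h'])
  · exact h1 (eq_of_dvd_sub_of_dvd_sub hε (Or.inl rfl) hε' (Or.inr rfl)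
      (dvd_sub_of_dvd_sub_center (by omega) h) (dvd_sub_of_dvd_sub_invAdd_center ht hε' h')).2.2
  · exact h1 (eq_of_dvd_sub_of_dvd_sub hε' (Or.inl rfl) hε (Or.inr rfl)
      (dvd_sub_of_dvd_sub_center (by omega) h') (dvd_sub_of_dvd_sub_invAdd_center ht hε h)).2.2
  · obtain ⟨rfl, rfl, -⟩ := eq_of_dvd_sub_of_dvd_sub hε (Or.inr rfl) hε' (Or.inr rfl)
      (dvd_sub_of_dvd_sub_invAdd_center ht hε h) (dvd_sub_of_dvd_sub_invAdd_center ht hε' h')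
    have hz := odd_of_mem_component ht hε (Or.inr h)
    exact hne (by rw [eq_of_dvd_sub_center (by omega) ha ha'
      (dvd_invAdd_sub_of_dvd_sub_invAdd (by omega) hz (odd_center hε) h)
      (dvd_invAdd_sub_of_dvd_sub_invAdd (by omega) hz (odd_center hε) h')])

theorem iUnion_component_union_eq (ht : 2 ≤ t) :
    (⋃ l : ℕ, ⋃ a ∈ Finset.range (2 ^ (t - 1)), ⋃ ε ∈ ({1, -1} : Set ℤ_[2]),
        component t l a ε) ∪ {1, -1} = {x : ℤ_[2] | ¬ 2 ∣ x} := by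
  ext z
  simp only [Set.mem_union, Set.mem_iUnion, Finset.mem_range, Set.mem_insert_iff,
    Set.mem_singleton_iff, Set.mem_ofPred_eq, exists_prop, ← odd_iff_not_two_dvd]
  constructor
  · rintro (⟨l, a, -, ε, hε, hz⟩ | rfl | rfl)
    · exact odd_of_mem_component ht hε hz
    · exact odd_one
    · exact odd_one.neg
  intro hz
  by_cases h₁ : z = 1
  · exact Or.inr (Or.inl h₁)
  by_cases h₂ : z = -1
  · exact Or.inr (Or.inr h₂)
  obtain ⟨ε, s, l, hε, rfl | rfl, h⟩ := exists_dvd_sub_of_odd hz h₁ h₂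
  · obtain ⟨a, ha, hza⟩ := exists_dvd_sub_center (t := t) (by omega) h
    exact Or.inl ⟨l, a, ha, ε, hε, Or.inl hza⟩
  · have hinv : 2 ^ (l + 4) ∣ invAdd (t + l + 2) z - (ε + 1 * 2 ^ (l + 2)) := by
      convert dvd_add (dvd_inverse_sub_of_dvd_sub hε (Or.inr rfl) h)
        (pow_dvd_pow 2 (by omega : l + 4 ≤ t + l + 2)) using 1
      rw [invAdd]
      ring
    obtain ⟨a, ha, hza⟩ := exists_dvd_sub_center (t := t) (by omega) hinv
    refine Or.inl ⟨l, a, ha, ε, hε, Or.inr (dvd_sub_comm.mp ?_)⟩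
    exact dvd_invAdd_sub_of_dvd_sub_invAdd (by omega) (odd_center hε) hz (dvd_sub_comm.mp hza)

end MonomialMap

open MonomialMap PadicInt in
theorem monomial_Z2_three_mod_four_decomposition_general (m : ℕ) (hmod : m % 4 = 3)
    (t : ℕ) (ht : t = padicValNat 2 (m + 1))
    (x₀ : ℕ → ℕ → ℤ_[2] → ℤ_[2])
    (hx₀ : ∀ l a ε, x₀ l a ε = ε + 2 ^ (l + 2) + 2 ^ (l + 4) * (a : ℤ_[2]))
    (M : ℕ → ℕ → ℤ_[2] → Set ℤ_[2])
    (hM : ∀ l a ε, M l a ε =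
      {x : ℤ_[2] | (2 : ℤ_[2]) ^ (t + l + 3) ∣ x - x₀ l a ε} ∪
      {x : ℤ_[2] | (2 : ℤ_[2]) ^ (t + l + 3) ∣
        x - (Ring.inverse (x₀ l a ε) + 2 ^ (t + l + 2))}) :
    (∀ l a (ε : ℤ_[2]), a < 2 ^ (t - 1) → (ε = 1 ∨ ε = -1) → IsUnit (x₀ l a ε)) ∧
    (∀ l a (ε : ℤ_[2]) l' a' (ε' : ℤ_[2]),
      a < 2 ^ (t - 1) → a' < 2 ^ (t - 1) → (ε = 1 ∨ ε = -1) → (ε' = 1 ∨ ε' = -1) →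
      (l, a, ε) ≠ (l', a', ε') → Disjoint (M l a ε) (M l' a' ε')) ∧
    (∀ l a (ε : ℤ_[2]), a < 2 ^ (t - 1) → (ε = 1 ∨ ε = -1) →
      IsClopen (M l a ε) ∧
      (∀ x ∈ M l a ε, x ^ m ∈ M l a ε) ∧
      (∀ x ∈ M l a ε, M l a ε ⊆ closure (Set.range fun n : ℕ => x ^ m ^ n))) ∧
    ((⋃ l : ℕ, ⋃ a ∈ Finset.range (2 ^ (t - 1)), ⋃ ε ∈ ({1, -1} : Set ℤ_[2]), M l a ε)
        ∪ {1, -1} = {x : ℤ_[2] | ¬ (2 : ℤ_[2]) ∣ x}) := by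
  obtain rfl : x₀ = center := funext fun l => funext fun a => funext fun ε => hx₀ l a ε
  obtain rfl : M = component t := funext fun l => funext fun a => funext fun ε => hM l a ε
  obtain ⟨q, hmq, hq⟩ := exists_eq_two_pow_padicValNat_mul_odd (Nat.succ_ne_zero m)
  rw [← ht] at hmq
  have ht2 : 2 ≤ t :=
    ht ▸ (padicValNat_dvd_iff_le (by omega)).mp (Nat.dvd_of_mod_eq_zero (by omega))
  refine ⟨fun l a ε _ hε => (isUnit_iff_odd _).mpr (odd_center hε),
    fun l a ε l' a' ε' ha ha' hε hε' hne => disjoint_component ht2 ha ha' hε hε' hne,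
    fun l a ε _ hε => ⟨isClopen_component, fun x hx => pow_mem_component ht2 hmq hq hε hx,
      fun x hx => component_subset_closure_orbit ht2 hmq hq hε hx⟩,
    iUnion_component_union_eq ht2⟩

/-- Minimal decomposition for `x ↦ x^m` on `ℤ_2` with `m ≡ 3 (mod 4)`:
with `x₀ = ε + 2^(l+2) + 2^(l+4)a` (a 2-adic unit), the sets
`M_{l,a,ε} = (x₀ + 2^(t+l+3)ℤ_2) ∪ (x₀⁻¹ + 2^(t+l+2) + 2^(t+l+3)ℤ_2)` are pairwise
disjoint clopen minimal components, and together with `{1, -1}` they cover exactly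
the 2-adic units. -/
theorem monomial_Z2_three_mod_four_decomposition (m : ℕ) (hm : 2 ≤ m) (hmod : m % 4 = 3)
    (t : ℕ) (ht : t = padicValNat 2 (m + 1))
    (x₀ : ℕ → ℕ → ℤ_[2] → ℤ_[2])
    (hx₀ : ∀ l a ε, x₀ l a ε = ε + 2 ^ (l + 2) + 2 ^ (l + 4) * (a : ℤ_[2]))
    (M : ℕ → ℕ → ℤ_[2] → Set ℤ_[2])
    (hM : ∀ l a ε, M l a ε =
      {x : ℤ_[2] | (2 : ℤ_[2]) ^ (t + l + 3) ∣ x - x₀ l a ε} ∪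
      {x : ℤ_[2] | (2 : ℤ_[2]) ^ (t + l + 3) ∣
        x - (Ring.inverse (x₀ l a ε) + 2 ^ (t + l + 2))}) :
    (∀ l a (ε : ℤ_[2]), a < 2 ^ (t - 1) → (ε = 1 ∨ ε = -1) → IsUnit (x₀ l a ε)) ∧
    (∀ l a (ε : ℤ_[2]) l' a' (ε' : ℤ_[2]),
      a < 2 ^ (t - 1) → a' < 2 ^ (t - 1) → (ε = 1 ∨ ε = -1) → (ε' = 1 ∨ ε' = -1) →
      (l, a, ε) ≠ (l', a', ε') → Disjoint (M l a ε) (M l' a' ε')) ∧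
    (∀ l a (ε : ℤ_[2]), a < 2 ^ (t - 1) → (ε = 1 ∨ ε = -1) →
      IsClopen (M l a ε) ∧
      (∀ x ∈ M l a ε, x ^ m ∈ M l a ε) ∧
      (∀ x ∈ M l a ε, M l a ε ⊆ closure (Set.range fun n : ℕ => x ^ m ^ n))) ∧
    ((⋃ l : ℕ, ⋃ a ∈ Finset.range (2 ^ (t - 1)), ⋃ ε ∈ ({1, -1} : Set ℤ_[2]), M l a ε)
        ∪ {1, -1} = {x : ℤ_[2] | ¬ (2 : ℤ_[2]) ∣ x}) :=
  monomial_Z2_three_mod_four_decomposition_general m hmod t ht x₀ hx₀ M hM
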